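/- arXiv:2006.10537 — 9 statements merged into one kernel-verified Lean document; each statement's English description precedes it below -/
import Mathlib

section
/- In a weakly Schreier split extension of monoids, if N (viewed as the kernel) is a group, then the extension is cosetal: whenever g, g' have equal image under e, i.e. e(g) = e(g'), there is n ∈ N with g = k(n)·g'. -/
/-- A weakly Schreier split extension of monoids with group kernel is cosetal:
if for all g there is n with g = k(n)·s(e(g)), and N is a group, then whenever e(g) = e(g')
there exists n with g = k(n)·g'. -/
theorem weaklySchreier_group_kernel_cosetal {N G H : Type*} [Group N] [Monoid G] [Monoid H]
    (k : N →* G) (e : G →* H) (s : H →* G)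
    (hs : ∀ h, e (s h) = h)
    (hws : ∀ g : G, ∃ n : N, g = k n * s (e g)) :
    ∀ g g' : G, e g = e g' → ∃ n : N, g = k n * g' := by
  intro g g' he
  obtain ⟨n, hn⟩ := hws g
  obtain ⟨n', hn'⟩ := hws g'
  refine ⟨n * n'⁻¹, ?_⟩
  have : k n'⁻¹ * g' = s (e g') := by
    nth_rewrite 1 [hn']; rw [← mul_assoc, ← map_mul, inv_mul_cancel, map_one, one_mul]
  rw [map_mul, mul_assoc, this, ← he, ← hn]
end

section
/- Given monoids N and H, an admissible H-indexed equivalence relation E on N (written n ∼^h n'), and a compatible action α : H × N → N, the set ⨆_{h∈H} N/∼^h with unit ([1],1) and product ([n],h)·([n'],h') = ([n·α(h,n')], h·h') is a monoid. -/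
/-- An admissible H-indexed equivalence relation E on N: for each h an equivalence
relation ∼^h on N such that ∼^1 is equality, left multiplication preserves ∼^h, and
n ∼^h n' implies n ∼^{h·y} n'. -/
structure IndexedEqv (H N : Type*) [Monoid H] [Monoid N] where
  r : H → N → N → Prop
  iseqv : ∀ h, Equivalence (r h)
  one_eq : ∀ {n n' : N}, r 1 n n' → n = n'
  mul_left : ∀ (x : N) {h : H} {n n' : N}, r h n n' → r h (x * n) (x * n')
  mul_right : ∀ (y : H) {h : H} {n n' : N}, r h n n' → r (h * y) n n'

def IndexedEqv.setoid {H N : Type*} [Monoid H] [Monoid N] (E : IndexedEqv H N) (h : H) :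
    Setoid N := ⟨E.r h, E.iseqv h⟩

/-- α : H × N → N is a compatible action for the admissible indexed equivalence relation E. -/
structure CompatibleAction {H N : Type*} [Monoid H] [Monoid N] (E : IndexedEqv H N)
    (α : H → N → N) : Prop where
  c1 : ∀ (h : H) (n n' x : N), E.r h n n' → E.r h (n * α h x) (n' * α h x)
  c2 : ∀ (h : H) (n n' : N) (x : H), E.r h n n' → E.r (x * h) (α x n) (α x n')
  c3 : ∀ (h : H) (n n' : N), E.r h (α h (n * n')) (α h n * α h n')
  c4 : ∀ (h h' : H) (n : N), E.r (h * h') (α (h * h') n) (α h (α h' n))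
  c5 : ∀ h : H, E.r h (α h 1) 1
  c6 : ∀ n : N, E.r 1 (α 1 n) n

/-- The carrier ⨆_{h ∈ H} N/∼^h of the weak semidirect product. -/
def WProd {H N : Type*} [Monoid H] [Monoid N] (E : IndexedEqv H N) : Type _ :=
  (h : H) × Quotient (E.setoid h)

/-- The element ([n], h). -/
def wmk {H N : Type*} [Monoid H] [Monoid N] (E : IndexedEqv H N) (h : H) (n : N) : WProd E :=
  ⟨h, Quotient.mk (E.setoid h) n⟩

/-- The multiplication ([n],h)·([n'],h') = ([n·α(h,n')], h·h') of the weak semidirect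
product N ⋊_{E,α} H. -/
def wmul {H N : Type*} [Monoid H] [Monoid N] (E : IndexedEqv H N) {α : H → N → N}
    (hα : CompatibleAction E α) : WProd E → WProd E → WProd E :=
  fun x y =>
    ⟨x.1 * y.1,
      Quotient.liftOn₂ x.2 y.2
        (fun n n' => Quotient.mk (E.setoid (x.1 * y.1)) (n * α x.1 n'))
        (fun a c b d hab hcd =>
          Quotient.sound
            ((E.iseqv (x.1 * y.1)).trans
              (E.mul_right y.1 (hα.c1 x.1 a b c hab))
              (E.mul_left b (hα.c2 y.1 c d x.1 hcd))))⟩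

/-! The monoid laws hold in `N` only up to the relations `∼^h`, but each defect is a relation at
exactly the index the product lands in, so it vanishes in the quotient: `c4` and `c3` repair
associativity at `h·h'·h''`, `c5` the right unit law at `h`, and `c6` the left one at `1`, where
`∼^1` is equality. -/

namespace WProd

variable {H N : Type*} [Monoid H] [Monoid N] {E : IndexedEqv H N}

theorem wmk_eq_wmk_of_rel {h : H} {n n' : N} (hr : E.r h n n') : wmk E h n = wmk E h n' :=
  congrArg (Sigma.mk h) (Quotient.sound (s := E.setoid h) hr)

@[elab_as_elim]
theorem ind {p : WProd E → Prop} (hp : ∀ h n, p (wmk E h n)) (x : WProd E) : p x := by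
  obtain ⟨h, q⟩ := x
  induction q using Quotient.ind
  exact hp h _

variable {α : H → N → N} (hα : CompatibleAction E α)
include hα

theorem wmul_wmk (h h' : H) (n n' : N) :
    wmul E hα (wmk E h n) (wmk E h' n') = wmk E (h * h') (n * α h n') :=
  rfl

theorem wmul_assoc (x y z : WProd E) :
    wmul E hα (wmul E hα x y) z = wmul E hα x (wmul E hα y z) := by
  induction x using ind with | hp h n => ?_
  induction y using ind with | hp h' n' => ?_
  induction z using ind with | hp h'' n'' => ?_
  simp only [wmul_wmk]
  calc wmk E (h * h' * h'') (n * α h n' * α (h * h') n'')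
      = wmk E (h * h' * h'') (n * α h n' * α h (α h' n'')) :=
        wmk_eq_wmk_of_rel (E.mul_left _ (E.mul_right h'' (hα.c4 h h' n'')))
    _ = wmk E (h * (h' * h'')) (n * (α h n' * α h (α h' n''))) := by simp only [mul_assoc]
    _ = wmk E (h * (h' * h'')) (n * α h (n' * α h' n'')) :=
        (wmk_eq_wmk_of_rel (E.mul_left n (E.mul_right _ (hα.c3 h n' (α h' n''))))).symm

theorem one_wmul (x : WProd E) : wmul E hα (wmk E 1 1) x = x := by
  induction x using ind with | hp h n => ?_
  rw [wmul_wmk, one_mul, one_mul, E.one_eq (hα.c6 n)]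

theorem wmul_one (x : WProd E) : wmul E hα x (wmk E 1 1) = x := by
  induction x using ind with | hp h n => ?_
  rw [wmul_wmk, mul_one, wmk_eq_wmk_of_rel (E.mul_left n (hα.c5 h)), mul_one]

abbrev monoid : Monoid (WProd E) where
  mul := wmul E hα
  one := wmk E 1 1
  mul_assoc := wmul_assoc hα
  one_mul := one_wmul hα
  mul_one := wmul_one hα

end WProd

/-- Given monoids N and H, an admissible H-indexed equivalence relation E and a
compatible action α, the set ⨆_{h∈H} N/∼^h is a monoid with unit ([1],1) and product
([n],h)·([n'],h') = ([n·α(h,n')], h·h'). -/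
theorem wprod_monoid {H N : Type*} [Monoid H] [Monoid N] (E : IndexedEqv H N)
    (α : H → N → N) (hα : CompatibleAction E α) :
    ∃ M : Monoid (WProd E),
      M.one = wmk E 1 1 ∧
      ∀ (h h' : H) (n n' : N),
        M.mul (wmk E h n) (wmk E h' n') = wmk E (h * h') (n * α h n') :=
  ⟨WProd.monoid hα, rfl, WProd.wmul_wmk hα⟩
end

section
/- With the weak semidirect product monoid N ⋊_{E,φ} H as above, the maps k(n) = ([n],1), e([n],h) = h and s(h) = ([1],h) form a weakly Schreier split extension: k is the kernel of e, e is the cokernel of k, e ∘ s = id, and every element ([n],h) equals k(n)·s(h). -/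
/-!
Because `∼^1` is equality, axiom `c6` forces `α 1 = id`; this makes `k` multiplicative and
gives the Schreier decomposition `([n], h) = ([n], 1) · ([1], h)` on the nose, while `c5` makes
`s` multiplicative. A homomorphism `f` killing the image of `k` then factors through `e` as
`h ↦ f (s h)`, since `f ([n], h) = f (k n) · f (s h)`.
-/

section WeakSemidirectProduct

variable {H N : Type*} [Monoid H] [Monoid N] {E : IndexedEqv H N} {α : H → N → N}

theorem CompatibleAction.one_act (hα : CompatibleAction E α) (n : N) : α 1 n = n :=
  E.one_eq (hα.c6 n)

theorem wmk_eq_wmk {h : H} {n n' : N} (hn : E.r h n n') : wmk E h n = wmk E h n' :=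
  congrArg (Sigma.mk h) (Quotient.sound hn)

theorem exists_eq_wmk (x : WProd E) : ∃ n, x = wmk E x.1 n := by
  obtain ⟨h, q⟩ := x
  obtain ⟨n, rfl⟩ := Quotient.exists_rep q
  exact ⟨n, rfl⟩

theorem wmk_one_injective : Function.Injective (wmk E 1) := fun _ _ h =>
  E.one_eq (Quotient.exact (eq_of_heq (Sigma.mk.inj_iff.mp h).2))

theorem fst_eq_one_iff_exists_eq_wmk (x : WProd E) : x.1 = 1 ↔ ∃ n, x = wmk E 1 n := by
  constructor
  · intro hx
    obtain ⟨n, hn⟩ := exists_eq_wmk x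
    exact ⟨n, hx ▸ hn⟩
  · rintro ⟨n, rfl⟩
    rfl

theorem wmul_wmk (hα : CompatibleAction E α) (h h' : H) (n n' : N) :
    wmul E hα (wmk E h n) (wmk E h' n') = wmk E (h * h') (n * α h n') :=
  rfl

theorem wmk_one_mul (hα : CompatibleAction E α) (n n' : N) :
    wmk E 1 (n * n') = wmul E hα (wmk E 1 n) (wmk E 1 n') := by
  rw [wmul_wmk, hα.one_act, one_mul]

theorem wmk_mul_one (hα : CompatibleAction E α) (h h' : H) :
    wmk E (h * h') 1 = wmul E hα (wmk E h 1) (wmk E h' 1) := by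
  rw [wmul_wmk, one_mul]
  exact wmk_eq_wmk ((E.iseqv _).symm (E.mul_right h' (hα.c5 h)))

theorem wmk_eq_wmul (hα : CompatibleAction E α) (h : H) (n : N) :
    wmk E h n = wmul E hα (wmk E 1 n) (wmk E h 1) := by
  rw [wmul_wmk, hα.one_act, mul_one, one_mul]

theorem exists_eq_wmul_wmk (hα : CompatibleAction E α) (x : WProd E) :
    ∃ n, x = wmul E hα (wmk E 1 n) (wmk E x.1 1) := by
  obtain ⟨n, hn⟩ := exists_eq_wmk x
  exact ⟨n, hn.trans (wmk_eq_wmul hα x.1 n)⟩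

theorem existsUnique_factor_fst (hα : CompatibleAction E α) {P : Type*} [Monoid P]
    (f : WProd E → P) (hf : ∀ x y, f (wmul E hα x y) = f x * f y)
    (hfk : ∀ n, f (wmk E 1 n) = 1) :
    ∃! g : H → P, (∀ a b, g (a * b) = g a * g b) ∧ g 1 = 1 ∧ ∀ x : WProd E, g x.1 = f x := by
  have hfactor (x : WProd E) : f (wmk E x.1 1) = f x := by
    obtain ⟨n, hn⟩ := exists_eq_wmk x
    calc f (wmk E x.1 1) = f (wmk E 1 n) * f (wmk E x.1 1) := by rw [hfk, one_mul]
      _ = f x := by rw [← hf, ← wmk_eq_wmul hα, ← hn]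
  refine ⟨fun h => f (wmk E h 1), ⟨fun a b => ?_, hfk 1, hfactor⟩, ?_⟩
  · simp only [wmk_mul_one hα a b, hf]
  · rintro g ⟨-, -, hg⟩
    exact funext fun h => hg (wmk E h 1)

end WeakSemidirectProduct

/-- With the weak semidirect product N ⋊_{E,α} H (carrier `WProd E`,
multiplication `wmul`), the maps k(n) = ([n],1), e([n],h) = h and s(h) = ([1],h) form a
weakly Schreier split extension: k and e and s are monoid homomorphisms, k is the kernel of
e (k is injective with image exactly e⁻¹(1)), e is the cokernel of k (universal property),
e ∘ s = id, and every element ([n],h) equals k(n)·s(h). -/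
theorem wprod_weakly_schreier_split_extension {H N : Type*} [Monoid H] [Monoid N]
    (E : IndexedEqv H N) (α : H → N → N) (hα : CompatibleAction E α) :
    -- k is a monoid homomorphism
    (∀ n n' : N, wmk E 1 (n * n') = wmul E hα (wmk E 1 n) (wmk E 1 n')) ∧
    -- e is a monoid homomorphism
    (∀ x y : WProd E, (wmul E hα x y).1 = x.1 * y.1) ∧ (wmk E 1 (1 : N)).1 = 1 ∧
    -- s is a monoid homomorphism
    (∀ h h' : H, wmk E (h * h') 1 = wmul E hα (wmk E h 1) (wmk E h' 1)) ∧
    -- e ∘ s = id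
    (∀ h : H, (wmk E h (1 : N)).1 = h) ∧
    -- k is the kernel of e: injective, with image exactly the elements sent by e to 1
    Function.Injective (fun n => wmk E 1 n) ∧
    (∀ x : WProd E, x.1 = 1 ↔ ∃ n : N, x = wmk E 1 n) ∧
    -- e is the cokernel of k: universal property of the coequaliser of k with the zero map
    (∀ (P : Type*) [Monoid P] (f : WProd E → P),
      (∀ x y, f (wmul E hα x y) = f x * f y) → f (wmk E 1 1) = 1 →
      (∀ n : N, f (wmk E 1 n) = 1) →
      ∃! g : H → P, (∀ a b : H, g (a * b) = g a * g b) ∧ g 1 = 1 ∧ ∀ x : WProd E, g x.1 = f x) ∧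
    -- the splitting is weakly Schreier: ([n],h) = k(n)·s(h)
    (∀ x : WProd E, ∃ n : N, x = wmul E hα (wmk E 1 n) (wmk E x.1 1)) := by
  exact ⟨wmk_one_mul hα, fun _ _ => rfl, rfl, wmk_mul_one hα, fun _ => rfl, wmk_one_injective,
    fst_eq_one_iff_exists_eq_wmk, fun _ _ f hf _ hfk => existsUnique_factor_fst hα f hf hfk,
    exists_eq_wmul_wmk hα⟩
end

section
/- Any morphism of split extensions between two weak semidirect products N ⋊_{E,φ} H and N ⋊_{E',φ'} H (i.e. a monoid homomorphism f commuting with the kernels, cokernels and sections) necessarily satisfies f([n],h) = ([n],h); in particular there is at most one such morphism. -/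
/-! Every element factors as `([n], h) = ([n], 1) · ([1], h)`, a kernel element times a section
element, so a multiplicative map commuting with the kernels and the sections is determined. -/

section

variable {H N : Type*} [Monoid H] [Monoid N] {E E' : IndexedEqv H N}

lemma wmk_eq_wmk_of_r {h : H} {n n' : N} (hr : E.r h n n') : wmk E h n = wmk E h n' :=
  congrArg (Sigma.mk h) (Quotient.sound hr)

lemma WProd.funext_wmk {β : Type*} {g g' : WProd E → β}
    (hg : ∀ (h : H) (n : N), g (wmk E h n) = g' (wmk E h n)) : g = g' := by
  funext ⟨h, q⟩
  induction q using Quotient.ind with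
  | _ n => exact hg h n

lemma wmul_wmk_one_wmk_one {α : H → N → N} (hα : CompatibleAction E α) (n : N) (h : H) :
    wmul E hα (wmk E 1 n) (wmk E h 1) = wmk E h n := by
  have hr : E.r 1 (n * α 1 1) n := by simpa using E.mul_left n (hα.c5 1)
  calc wmul E hα (wmk E 1 n) (wmk E h 1) = wmk E (1 * h) (n * α 1 1) := rfl
    _ = wmk E (1 * h) n := wmk_eq_wmk_of_r (E.mul_right h hr)
    _ = wmk E h n := by rw [one_mul]

lemma map_wmk_of_map_wmul {α α' : H → N → N} {hα : CompatibleAction E α}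
    {hα' : CompatibleAction E' α'} {f : WProd E → WProd E'}
    (hmul : ∀ x y, f (wmul E hα x y) = wmul E' hα' (f x) (f y))
    (hk : ∀ n : N, f (wmk E 1 n) = wmk E' 1 n) (hsec : ∀ h : H, f (wmk E h 1) = wmk E' h 1)
    (h : H) (n : N) : f (wmk E h n) = wmk E' h n := by
  rw [← wmul_wmk_one_wmk_one hα, hmul, hk, hsec, wmul_wmk_one_wmk_one hα']

end

theorem wprod_morphism_unique_general {H N : Type*} [Monoid H] [Monoid N]
    (E E' : IndexedEqv H N) (α α' : H → N → N)
    (hα : CompatibleAction E α) (hα' : CompatibleAction E' α')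
    (f : WProd E → WProd E')
    (hmul : ∀ x y, f (wmul E hα x y) = wmul E' hα' (f x) (f y))
    (hk : ∀ n : N, f (wmk E 1 n) = wmk E' 1 n)
    (hsec : ∀ h : H, f (wmk E h 1) = wmk E' h 1) :
    (∀ (h : H) (n : N), f (wmk E h n) = wmk E' h n) ∧
    ∀ f' : WProd E → WProd E',
      (∀ x y, f' (wmul E hα x y) = wmul E' hα' (f' x) (f' y)) →
      (∀ n : N, f' (wmk E 1 n) = wmk E' 1 n) →
      (∀ h : H, f' (wmk E h 1) = wmk E' h 1) → f' = f :=
  ⟨map_wmk_of_map_wmul hmul hk hsec, fun _ hmul' hk' hsec' => WProd.funext_wmk fun h n => by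
    rw [map_wmk_of_map_wmul hmul' hk' hsec', map_wmk_of_map_wmul hmul hk hsec]⟩

/-- Any morphism of split extensions between two weak semidirect products
N ⋊_{E,α} H and N ⋊_{E',α'} H — i.e. a monoid homomorphism f commuting with the kernel maps
k(n) = ([n],1), the cokernel maps e([n],h) = h and the sections s(h) = ([1],h) — necessarily
satisfies f([n],h) = ([n],h).  In particular there is at most one such morphism. -/
theorem wprod_morphism_unique {H N : Type*} [Monoid H] [Monoid N]
    (E E' : IndexedEqv H N) (α α' : H → N → N)
    (hα : CompatibleAction E α) (hα' : CompatibleAction E' α')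
    (f : WProd E → WProd E')
    (hmul : ∀ x y, f (wmul E hα x y) = wmul E' hα' (f x) (f y))
    (hone : f (wmk E 1 1) = wmk E' 1 1)
    (hk : ∀ n : N, f (wmk E 1 n) = wmk E' 1 n)
    (he : ∀ x : WProd E, (f x).1 = x.1)
    (hsec : ∀ h : H, f (wmk E h 1) = wmk E' h 1) :
    (∀ (h : H) (n : N), f (wmk E h n) = wmk E' h n) ∧
    ∀ f' : WProd E → WProd E',
      (∀ x y, f' (wmul E hα x y) = wmul E' hα' (f' x) (f' y)) →
      (∀ n : N, f' (wmk E 1 n) = wmk E' 1 n) →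
      (∀ h : H, f' (wmk E h 1) = wmk E' h 1) → f' = f :=
  wprod_morphism_unique_general E E' α α' hα hα' f hmul hk hsec
end

section
/- Let N be an abelian group, H a monoid, (E,φ) a compatible pair. The set of factor sets relative to (E,φ), under pointwise multiplication modulo the equivalence g ≡ g' iff there is an identity-preserving function t : H → N with φ(h, t(h'))·t(h·h')^{-1}·t(h)·g'(h,h') ∼^{h·h'} g(h,h') for all h,h', forms an abelian group. -/
/-- A factor set relative to the compatible pair (E, α), with abelian group kernel N:
g(h,1) ∼^h 1 ∼^h g(1,h) and g(x,y)·g(xy,z) ∼^{xyz} α(x, g(y,z))·g(x, yz). -/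
def IsFactorSet {H N : Type*} [Monoid H] [CommGroup N] (E : IndexedEqv H N)
    (α : H → N → N) (g : H → H → N) : Prop :=
  (∀ h : H, E.r h (g h 1) 1) ∧ (∀ h : H, E.r h (g 1 h) 1) ∧
  ∀ x y z : H, E.r (x * y * z) (g x y * g (x * y) z) (α x (g y z) * g x (y * z))

/-- The multiplication ([n],h)·([n'],h') = ([n·α(h,n')·g(h,h')], h·h') of
N ⋊_{E,α}^g H. -/
def wgmul {H N : Type*} [Monoid H] [CommGroup N] (E : IndexedEqv H N) {α : H → N → N}
    (g : H → H → N) (hα : CompatibleAction E α) : WProd E → WProd E → WProd E :=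
  fun x y =>
    ⟨x.1 * y.1,
      Quotient.liftOn₂ x.2 y.2
        (fun n n' => Quotient.mk (E.setoid (x.1 * y.1)) (n * α x.1 n' * g x.1 y.1))
        (by
          intro a c b d hab hcd
          apply Quotient.sound
          have h1 : E.r (x.1 * y.1) (a * α x.1 c) (b * α x.1 d) :=
            (E.iseqv _).trans (E.mul_right y.1 (hα.c1 x.1 a b c hab))
              (E.mul_left b (hα.c2 y.1 c d x.1 hcd))
          have h2 := E.mul_left (g x.1 y.1) h1
          show E.r (x.1 * y.1) (a * α x.1 c * g x.1 y.1) (b * α x.1 d * g x.1 y.1)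
          simpa [mul_comm, mul_assoc, mul_left_comm] using h2)⟩

/-- The type of factor sets relative to (E, α). -/
def FactorSets {H N : Type*} [Monoid H] [CommGroup N] (E : IndexedEqv H N)
    (α : H → N → N) : Type _ := {g : H → H → N // IsFactorSet E α g}

/-- Two factor sets are equivalent iff they differ by an inner factor set
δt(h,h') = α(h,t(h'))·t(hh')⁻¹·t(h) for an identity-preserving t : H → N, up to ∼^{hh'}. -/
def fsEquiv {H N : Type*} [Monoid H] [CommGroup N] (E : IndexedEqv H N) (α : H → N → N) :
    FactorSets E α → FactorSets E α → Prop :=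
  fun g g' => ∃ t : H → N, t 1 = 1 ∧
    ∀ h h' : H, E.r (h * h') (α h (t h') * (t (h * h'))⁻¹ * t h * g'.1 h h') (g.1 h h')

/-! Because `N` is abelian, every `∼^k` is a congruence, so `N/∼^k` is an abelian group, and
`n ↦ [α h n]` is a homomorphism into `N/∼^{h y}`. Each factor-set axiom therefore says that two
homomorphisms `(H → H → N) → N/∼^k` agree, so the factor sets form a subgroup `Z` of the pointwise
group `H → H → N`. Likewise `t ↦ δt` is a homomorphism modulo `∼`, so the functions that agree with
some inner factor set form a subgroup `B`. Two factor sets are equivalent iff their quotient lies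
in `B`, so the quotient by the equivalence is `Z ⧸ (B ∩ Z)` and inherits its group structure. -/

theorem Con.coe_div {M : Type*} [Group M] (c : Con M) (a b : M) :
    ((a / b : M) : c.Quotient) = a / b := rfl

namespace IndexedEqv

variable {H N : Type*} [Monoid H] [CommMonoid N] (E : IndexedEqv H N)

def con (k : H) : Con N where
  r := E.r k
  iseqv := E.iseqv k
  mul' {a b c d} hab hcd := (E.iseqv k).trans (E.mul_left a hcd)
    (by simpa only [mul_comm _ d] using E.mul_left d hab)

theorem r_iff_mk_eq {k : H} {a b : N} : E.r k a b ↔ (a : (E.con k).Quotient) = b :=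
  (Con.eq (E.con k)).symm

def evalMod (k h h' : H) : (H → H → N) →* (E.con k).Quotient :=
  (E.con k).mk'.comp
    ((Pi.evalMonoidHom (fun _ : H => N) h').comp (Pi.evalMonoidHom (fun _ : H => H → N) h))

@[simp]
theorem evalMod_apply (k h h' : H) (g : H → H → N) : E.evalMod k h h' g = g h h' := rfl

end IndexedEqv

namespace CompatibleAction

section CommMonoid

variable {H N : Type*} [Monoid H] [CommMonoid N] {E : IndexedEqv H N} {α : H → N → N}
  (hα : CompatibleAction E α)

def actMod (h y : H) : N →* (E.con (h * y)).Quotient where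
  toFun n := α h n
  map_one' := E.r_iff_mk_eq.1 (E.mul_right y (hα.c5 h))
  map_mul' a b := E.r_iff_mk_eq.1 (E.mul_right y (hα.c3 h a b))

@[simp]
theorem actMod_apply (h y : H) (n : N) : hα.actMod h y n = α h n := rfl

end CommMonoid

variable {H N : Type*} [Monoid H] [CommGroup N] {E : IndexedEqv H N} {α : H → N → N}
  (hα : CompatibleAction E α)

def cocycles : Subgroup (H → H → N) :=
  (⨅ h, (E.evalMod h h 1).ker) ⊓ (⨅ h, (E.evalMod h 1 h).ker) ⊓
    ⨅ (x) (y) (z), (E.evalMod _ x y * E.evalMod _ (x * y) z /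
      ((hα.actMod x (y * z)).comp
        ((Pi.evalMonoidHom (fun _ : H => N) z).comp (Pi.evalMonoidHom (fun _ : H => H → N) y)) *
        E.evalMod _ x (y * z))).ker

theorem mem_cocycles {g : H → H → N} : g ∈ hα.cocycles ↔ IsFactorSet E α g := by
  simp only [cocycles, Subgroup.mem_inf, Subgroup.mem_iInf, MonoidHom.mem_ker, MonoidHom.div_apply,
    div_eq_one, MonoidHom.mul_apply, IndexedEqv.evalMod_apply, MonoidHom.comp_apply, actMod_apply,
    Pi.evalMonoidHom_apply, IsFactorSet, E.r_iff_mk_eq, mul_assoc, Con.coe_mul, Con.coe_one,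
    and_assoc]

def coboundaryMod (h h' : H) : (H → N) →* (E.con (h * h')).Quotient :=
  (hα.actMod h h').comp (Pi.evalMonoidHom _ h') *
    ((E.con _).mk'.comp (Pi.evalMonoidHom _ (h * h')))⁻¹ * (E.con _).mk'.comp (Pi.evalMonoidHom _ h)

@[simp]
theorem coboundaryMod_apply (h h' : H) (t : H → N) :
    hα.coboundaryMod h h' t = ↑(α h (t h') * (t (h * h'))⁻¹ * t h) := rfl

def coboundaries : Subgroup (H → H → N) :=
  ((Pi.evalMonoidHom _ 1).ker.map (MonoidHom.pi fun p : H × H => hα.coboundaryMod p.1 p.2)).comap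
    (MonoidHom.pi fun p : H × H => E.evalMod _ p.1 p.2)

theorem mem_coboundaries {f : H → H → N} : f ∈ hα.coboundaries ↔
    ∃ t : H → N, t 1 = 1 ∧ ∀ h h', E.r (h * h') (α h (t h') * (t (h * h'))⁻¹ * t h) (f h h') := by
  simp only [coboundaries, Subgroup.mem_comap, Subgroup.mem_map, MonoidHom.mem_ker, funext_iff,
    Prod.forall, MonoidHom.pi_apply, coboundaryMod_apply, IndexedEqv.evalMod_apply,
    Pi.evalMonoidHom_apply, E.r_iff_mk_eq]

theorem fsEquiv_iff_div_mem {g g' : FactorSets E α} :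
    fsEquiv E α g g' ↔ g.1 / g'.1 ∈ hα.coboundaries := by
  simp only [fsEquiv, mem_coboundaries, Pi.div_apply, E.r_iff_mk_eq, Con.coe_mul, Con.coe_div,
    eq_div_iff_mul_eq']

def factorSetsEquiv : FactorSets E α ≃ hα.cocycles :=
  Equiv.subtypeEquivRight fun _ => hα.mem_cocycles.symm

@[simp]
theorem coe_factorSetsEquiv (g : FactorSets E α) : (hα.factorSetsEquiv g : H → H → N) = g.1 :=
  rfl

/-- The second cohomology group `H²(H, N, E, [α])`. -/
abbrev SecondCohomology : Type _ := hα.cocycles ⧸ hα.coboundaries.subgroupOf hα.cocycles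

theorem fsEquiv_iff_leftRel {g g' : FactorSets E α} :
    fsEquiv E α g g' ↔ QuotientGroup.leftRel (hα.coboundaries.subgroupOf hα.cocycles)
      (hα.factorSetsEquiv g) (hα.factorSetsEquiv g') := by
  rw [QuotientGroup.leftRel_apply, Subgroup.mem_subgroupOf, ← inv_mem_iff,
    hα.fsEquiv_iff_div_mem]
  simp [div_eq_mul_inv, mul_comm]

theorem equivalence_fsEquiv (hα : CompatibleAction E α) : Equivalence (fsEquiv E α) :=
  have eqv := (QuotientGroup.leftRel (hα.coboundaries.subgroupOf hα.cocycles)).iseqv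
  ⟨fun _ => hα.fsEquiv_iff_leftRel.2 (eqv.refl _),
    fun h => hα.fsEquiv_iff_leftRel.2 (eqv.symm (hα.fsEquiv_iff_leftRel.1 h)),
    fun h₁ h₂ => hα.fsEquiv_iff_leftRel.2
      (eqv.trans (hα.fsEquiv_iff_leftRel.1 h₁) (hα.fsEquiv_iff_leftRel.1 h₂))⟩

def quotFsEquivEquiv : Quot (fsEquiv E α) ≃ hα.SecondCohomology :=
  Quot.congr hα.factorSetsEquiv fun _ _ => hα.fsEquiv_iff_leftRel

end CompatibleAction

/-- The factor sets relative to (E,α), under pointwise multiplication modulo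
the inner factor sets, form an abelian group (the second cohomology group H²(H,N,E,[α])). -/
theorem factor_sets_comm_group {H N : Type*} [Monoid H] [CommGroup N] (E : IndexedEqv H N)
    (α : H → N → N) (hα : CompatibleAction E α) :
    -- the relation "differ by an inner factor set" is an equivalence relation
    Equivalence (fsEquiv E α) ∧
    -- factor sets are closed under pointwise multiplication
    (∀ g g' : FactorSets E α, IsFactorSet E α (fun h h' => g.1 h h' * g'.1 h h')) ∧
    -- the quotient is an abelian group under pointwise multiplication
    ∃ G : CommGroup (Quot (fsEquiv E α)),
      ∀ (g g' : FactorSets E α) (hp : IsFactorSet E α (fun h h' => g.1 h h' * g'.1 h h')),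
        G.mul (Quot.mk _ g) (Quot.mk _ g') =
          Quot.mk _ ⟨fun h h' => g.1 h h' * g'.1 h h', hp⟩ :=
  ⟨hα.equivalence_fsEquiv,
    fun g g' => hα.mem_cocycles.1 (mul_mem (hα.mem_cocycles.2 g.2) (hα.mem_cocycles.2 g'.2)),
    hα.quotFsEquivEquiv.commGroup, fun _ _ _ => rfl⟩
end

section
/- Let f be a morphism of cosetal extensions of monoids with fixed kernel N and cokernel H (f ∘ k₁ = k₂, e₂ ∘ f = e₁). If E₁, E₂ are the H-indexed equivalence relations associated to the two extensions (n ∼^h n' iff k_i(n)·s(h) = k_i(n')·s(h) for a set-theoretic section s of e_i), then E₁ ⊆ E₂. -/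
/-!
Pushing the relation `k₁ n * s₁ h = k₁ n' * s₁ h` forward along `f` gives the relation for the
element `f (s₁ h)` of the fibre of `e₂` over `h`. Within a fibre of a cosetal extension any two
elements differ by a left factor `k m`, which commutes with the image of `N` and is a unit, so it
can be cancelled: the relation does not depend on the chosen point of the fibre.
-/

def IsCosetal {N G H : Type*} [Monoid N] [Monoid G] [Monoid H] (k : N →* G) (e : G →* H) :
    Prop :=
  ∀ g g' : G, e g = e g' → ∃ n : N, g = k n * g'

theorem MonoidHom.mul_map_mul_eq_iff {N G : Type*} [CommGroup N] [Monoid G] (k : N →* G)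
    (m n n' : N) (g : G) : k n * (k m * g) = k n' * (k m * g) ↔ k n * g = k n' * g := by
  have hcomm : ∀ a : N, k a * (k m * g) = k m * (k a * g) := fun a => by
    rw [← mul_assoc, ← mul_assoc, ← map_mul, ← map_mul, mul_comm]
  rw [hcomm, hcomm, ((Group.isUnit m).map k).mul_right_inj]

theorem IsCosetal.mul_eq_mul_iff_of_map_eq {N G H : Type*} [CommGroup N] [Monoid G] [Monoid H]
    {k : N →* G} {e : G →* H} (hcos : IsCosetal k e) {g g' : G} (he : e g = e g') (n n' : N) :
    k n * g = k n' * g ↔ k n * g' = k n' * g' := by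
  obtain ⟨m, rfl⟩ := hcos g g' he
  exact k.mul_map_mul_eq_iff m n n' g'

theorem morphism_cosetal_eqv_subset_general {N G₁ G₂ H : Type*} [CommGroup N] [Monoid G₁] [Monoid G₂]
    [Monoid H]
    (k₁ : N →* G₁) (e₁ : G₁ →* H) (k₂ : N →* G₂) (e₂ : G₂ →* H) (f : G₁ →* G₂)
    (hfk : ∀ n, f (k₁ n) = k₂ n) (hef : ∀ g, e₂ (f g) = e₁ g)
    (hcos₂ : ∀ g g' : G₂, e₂ g = e₂ g' → ∃ n : N, g = k₂ n * g')
    (s₁ : H → G₁) (hs₁ : ∀ h, e₁ (s₁ h) = h)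
    (s₂ : H → G₂) (hs₂ : ∀ h, e₂ (s₂ h) = h) :
    ∀ (h : H) (n n' : N), k₁ n * s₁ h = k₁ n' * s₁ h → k₂ n * s₂ h = k₂ n' * s₂ h := by
  intro h n n' heq
  have hf : k₂ n * f (s₁ h) = k₂ n' * f (s₁ h) := by
    simpa only [map_mul, hfk] using congrArg f heq
  have he : e₂ (f (s₁ h)) = e₂ (s₂ h) := by rw [hef, hs₁, hs₂]
  exact (IsCosetal.mul_eq_mul_iff_of_map_eq hcos₂ he n n').1 hf

/-- If f is a morphism of cosetal extensions of monoids with kernel N (an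
abelian group) and cokernel H, and E₁, E₂ are the H-indexed equivalence relations associated
to the two extensions via set-theoretic sections, then E₁ ⊆ E₂. -/
theorem morphism_cosetal_eqv_subset {N G₁ G₂ H : Type*} [CommGroup N] [Monoid G₁] [Monoid G₂]
    [Monoid H]
    (k₁ : N →* G₁) (e₁ : G₁ →* H) (k₂ : N →* G₂) (e₂ : G₂ →* H) (f : G₁ →* G₂)
    (hfk : ∀ n, f (k₁ n) = k₂ n) (hef : ∀ g, e₂ (f g) = e₁ g)
    (hcos₁ : ∀ g g' : G₁, e₁ g = e₁ g' → ∃ n : N, g = k₁ n * g')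
    (hcos₂ : ∀ g g' : G₂, e₂ g = e₂ g' → ∃ n : N, g = k₂ n * g')
    (s₁ : H → G₁) (hs₁ : ∀ h, e₁ (s₁ h) = h)
    (s₂ : H → G₂) (hs₂ : ∀ h, e₂ (s₂ h) = h) :
    ∀ (h : H) (n n' : N), k₁ n * s₁ h = k₁ n' * s₁ h → k₂ n * s₂ h = k₂ n' * s₂ h :=
  morphism_cosetal_eqv_subset_general k₁ e₁ k₂ e₂ f hfk hef hcos₂ s₁ hs₁ s₂ hs₂
end

section
/- Let N be an abelian group, H a monoid, (E,φ) a compatible pair and g a factor set. For a function t* : H → N with t*(1) = 1, the map t([n],h) = ([t*(h)·n], h) on N ⋊_{E,φ}^g H is a monoid homomorphism if and only if t* is a crossed homomorphism relative to (E,φ), i.e. t*(h·h') ∼^{h·h'} t*(h)·φ(h, t*(h')) for all h,h' ∈ H. -/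
/-- The map ([n],h) ↦ ([t(h)·n],h) on the weak semidirect product (well defined since left
multiplication preserves ∼^h). -/
def tmap {H N : Type*} [Monoid H] [Monoid N] (E : IndexedEqv H N) (t : H → N) :
    WProd E → WProd E :=
  fun x =>
    ⟨x.1,
      Quotient.liftOn x.2 (fun n => Quotient.mk (E.setoid x.1) (t x.1 * n))
        (fun a b hab => Quotient.sound (E.mul_left (t x.1) hab))⟩

/- On representatives, t(x·y) = t(x)·t(y) for x = ([n],h), y = ([n'],h') compares t*(hh')·X with
t*(h)·α(h,t*(h'))·X, where X = n·α(h,n')·g(h,h'), once α(h, t*(h')·n') is split by compatibility.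
Cancelling X in the group N leaves exactly the crossed-homomorphism condition. -/

namespace IndexedEqv

variable {H N : Type*} [Monoid H]

lemma r_congr_right [Monoid N] (E : IndexedEqv H N) {h : H} {a b c : N} (hbc : E.r h b c) :
    E.r h a b ↔ E.r h a c :=
  ⟨fun hab => (E.iseqv h).trans hab hbc, fun hac => (E.iseqv h).trans hac ((E.iseqv h).symm hbc)⟩

lemma r_mul_left_iff [Group N] (E : IndexedEqv H N) {h : H} (x a b : N) :
    E.r h (x * a) (x * b) ↔ E.r h a b := by
  refine ⟨fun hr => ?_, E.mul_left x⟩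
  simpa only [inv_mul_cancel_left] using E.mul_left x⁻¹ hr

lemma r_mul_right_iff [CommGroup N] (E : IndexedEqv H N) {h : H} (x a b : N) :
    E.r h (a * x) (b * x) ↔ E.r h a b := by
  rw [mul_comm a, mul_comm b, r_mul_left_iff]

end IndexedEqv

section WProd

variable {H N : Type*} [Monoid H]

lemma wmk_surjective [Monoid N] (E : IndexedEqv H N) (x : WProd E) : ∃ h n, x = wmk E h n := by
  obtain ⟨h, q⟩ := x
  induction q using Quotient.ind with | _ n => exact ⟨h, n, rfl⟩

lemma wmk_eq_iff [Monoid N] (E : IndexedEqv H N) (h : H) (n n' : N) :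
    wmk E h n = wmk E h n' ↔ E.r h n n' :=
  ⟨fun heq => Quotient.exact (eq_of_heq (Sigma.mk.inj_iff.mp heq).2),
    fun hr => congrArg (Sigma.mk h) (Quotient.sound hr)⟩

lemma tmap_wmk [Monoid N] (E : IndexedEqv H N) (t : H → N) (h : H) (n : N) :
    tmap E t (wmk E h n) = wmk E h (t h * n) := rfl

lemma wgmul_wmk [CommGroup N] (E : IndexedEqv H N) {α : H → N → N} (g : H → H → N)
    (hα : CompatibleAction E α) (h h' : H) (n n' : N) :
    wgmul E g hα (wmk E h n) (wmk E h' n') = wmk E (h * h') (n * α h n' * g h h') := rfl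

lemma tmap_wgmul_wmk_iff [CommGroup N] (E : IndexedEqv H N) {α : H → N → N} (g : H → H → N)
    (hα : CompatibleAction E α) (t : H → N) (h h' : H) (n n' : N) :
    tmap E t (wgmul E g hα (wmk E h n) (wmk E h' n')) =
        wgmul E g hα (tmap E t (wmk E h n)) (tmap E t (wmk E h' n')) ↔
      E.r (h * h') (t (h * h')) (t h * α h (t h')) := by
  simp only [tmap_wmk, wgmul_wmk, wmk_eq_iff]
  have split : E.r (h * h') (t h * n * α h (t h' * n') * g h h')
      (t h * α h (t h') * (n * α h n' * g h h')) := by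
    have := E.mul_left (t h * n * g h h') (E.mul_right h' (hα.c3 h (t h') n'))
    convert this using 1 <;> ac_rfl
  rw [E.r_congr_right split, E.r_mul_right_iff]

end WProd

theorem tmap_hom_iff_crossed_hom_general {H N : Type*} [Monoid H] [CommGroup N]
    (E : IndexedEqv H N) (α : H → N → N) (hα : CompatibleAction E α)
    (g : H → H → N)
    (t : H → N) (ht1 : t 1 = 1) :
    ((∀ x y : WProd E, tmap E t (wgmul E g hα x y) = wgmul E g hα (tmap E t x) (tmap E t y)) ∧
      tmap E t (wmk E 1 1) = wmk E 1 1) ↔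
    ∀ h h' : H, E.r (h * h') (t (h * h')) (t h * α h (t h')) := by
  constructor
  · rintro ⟨hom, -⟩ h h'
    exact (tmap_wgmul_wmk_iff E g hα t h h' 1 1).1 (hom _ _)
  · intro crossed
    refine ⟨fun x y => ?_, by rw [tmap_wmk, ht1, one_mul]⟩
    obtain ⟨h, n, rfl⟩ := wmk_surjective E x
    obtain ⟨h', n', rfl⟩ := wmk_surjective E y
    exact (tmap_wgmul_wmk_iff E g hα t h h' n n').2 (crossed h h')

/-- For t* : H → N with t*(1) = 1, the map t([n],h) = ([t*(h)·n],h) on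
N ⋊_{E,α}^g H is a monoid homomorphism if and only if t* is a crossed homomorphism relative
to (E,α), i.e. t*(h·h') ∼^{h·h'} t*(h)·α(h, t*(h')). -/
theorem tmap_hom_iff_crossed_hom {H N : Type*} [Monoid H] [CommGroup N]
    (E : IndexedEqv H N) (α : H → N → N) (hα : CompatibleAction E α)
    (g : H → H → N) (hg : IsFactorSet E α g)
    (t : H → N) (ht1 : t 1 = 1) :
    ((∀ x y : WProd E, tmap E t (wgmul E g hα x y) = wgmul E g hα (tmap E t x) (tmap E t y)) ∧
      tmap E t (wmk E 1 1) = wmk E 1 1) ↔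
    ∀ h h' : H, E.r (h * h') (t (h * h')) (t h * α h (t h')) :=
  tmap_hom_iff_crossed_hom_general E α hα g t ht1
end

section
/- If α : H × N → N is compatible with some admissible H-indexed equivalence relation E, then α is also compatible with the coarse equivalence relation E_α defined by n ∼_α^h n' iff ∀ x,y ∈ H, x·h·y = 1 → α(x,n) = α(x,n'); moreover E_α is admissible and is the largest equivalence relation compatible with α. Consequently, the set of equivalence relations compatible with a valid α forms a complete lattice. -/
/-- An admissible H-indexed equivalence relation on N: each ∼^h is an equivalence relation,
∼^1 is equality, left multiplication preserves ∼^h, and n ∼^h n' implies n ∼^{h·y} n'. -/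
def IsAdmissible {H N : Type*} [Monoid H] [Monoid N] (r : H → N → N → Prop) : Prop :=
  (∀ h : H, Equivalence (r h)) ∧
  (∀ n n' : N, r 1 n n' → n = n') ∧
  (∀ (h : H) (n n' x : N), r h n n' → r h (x * n) (x * n')) ∧
  (∀ (h : H) (n n' : N) (y : H), r h n n' → r (h * y) n n')

/-- α : H × N → N is a compatible action for the H-indexed equivalence relation r
(the six conditions of a compatible action). -/
def IsCompatibleAction {H N : Type*} [Monoid H] [Monoid N] (r : H → N → N → Prop)
    (α : H → N → N) : Prop :=
  (∀ (h : H) (n n' x : N), r h n n' → r h (n * α h x) (n' * α h x)) ∧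
  (∀ (h : H) (n n' : N) (x : H), r h n n' → r (x * h) (α x n) (α x n')) ∧
  (∀ (h : H) (n n' : N), r h (α h (n * n')) (α h n * α h n')) ∧
  (∀ (h h' : H) (n : N), r (h * h') (α (h * h') n) (α h (α h' n))) ∧
  (∀ h : H, r h (α h 1) 1) ∧
  (∀ n : N, r 1 (α 1 n) n)

/-!
For an admissible `e`, the relation `e x` collapses to equality as soon as `x` has a right
inverse (`x * z = 1` gives `e x ≤ e (x * z) = e 1`). Hence every axiom of a compatible action
holds as an honest equation at such `x`. Since `x * h * y = 1` makes both `x` and `x * h`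
right invertible, these equations are exactly what is needed to check that the coarse relation
`E_α` is admissible and compatible, and compatibility of any `e'` pushed through `α x` shows
`e' ≤ E_α`. Admissibility and compatibility are preserved by intersections (nonempty ones, for
admissibility), so intersecting with `E_α` gives every family of compatible relations a meet.
-/

section

variable {H N : Type*} [Monoid H] [Monoid N]

/-- The coarse relation `E_α`. -/
def coarseRel (α : H → N → N) : H → N → N → Prop :=
  fun h n n' => ∀ x y : H, x * h * y = 1 → α x n = α x n'

namespace IsAdmissible

variable {r : H → N → N → Prop}

theorem eq_of_mul_eq_one (hr : IsAdmissible r) {x z : H} (hxz : x * z = 1) {n n' : N}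
    (hn : r x n n') : n = n' :=
  hr.2.1 n n' (hxz ▸ hr.2.2.2 x n n' z hn)

theorem iInf {ι : Type*} [Nonempty ι] {r : ι → H → N → N → Prop}
    (hr : ∀ i, IsAdmissible (r i)) : IsAdmissible (fun h n n' => ∀ i, r i h n n') := by
  refine ⟨fun h => ⟨fun n i => ((hr i).1 h).refl n, fun hn i => ((hr i).1 h).symm (hn i),
      fun hn hn' i => ((hr i).1 h).trans (hn i) (hn' i)⟩, ?_,
    fun h n n' x hn i => (hr i).2.2.1 h n n' x (hn i),
    fun h n n' y hn i => (hr i).2.2.2 h n n' y (hn i)⟩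
  intro n n' hn
  obtain ⟨i⟩ := ‹Nonempty ι›
  exact (hr i).2.1 n n' (hn i)

end IsAdmissible

namespace IsCompatibleAction

variable {α : H → N → N}

theorem iInf {ι : Type*} {r : ι → H → N → N → Prop} (hr : ∀ i, IsCompatibleAction (r i) α) :
    IsCompatibleAction (fun h n n' => ∀ i, r i h n n') α :=
  ⟨fun h n n' x hn i => (hr i).1 h n n' x (hn i),
   fun h n n' x hn i => (hr i).2.1 h n n' x (hn i),
   fun h n n' i => (hr i).2.2.1 h n n',
   fun h h' n i => (hr i).2.2.2.1 h h' n,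
   fun h i => (hr i).2.2.2.2.1 h,
   fun n i => (hr i).2.2.2.2.2 n⟩

variable {r : H → N → N → Prop} (hr : IsAdmissible r) (hα : IsCompatibleAction r α)
include hr hα

theorem map_mul_of_mul_eq_one {x z : H} (hxz : x * z = 1) (n n' : N) :
    α x (n * n') = α x n * α x n' :=
  hr.eq_of_mul_eq_one hxz (hα.2.2.1 x n n')

theorem map_mul_apply_of_mul_eq_one {x h z : H} (hxz : x * h * z = 1) (n : N) :
    α (x * h) n = α x (α h n) :=
  hr.eq_of_mul_eq_one hxz (hα.2.2.2.1 x h n)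

theorem map_one_of_mul_eq_one {x z : H} (hxz : x * z = 1) : α x 1 = 1 :=
  hr.eq_of_mul_eq_one hxz (hα.2.2.2.2.1 x)

theorem one_apply (n : N) : α 1 n = n :=
  hr.2.1 _ _ (hα.2.2.2.2.2 n)

theorem le_coarseRel {h : H} {n n' : N} (hn : r h n n') : coarseRel α h n n' :=
  fun x _ hxy => hr.eq_of_mul_eq_one hxy (hα.2.1 h n n' x hn)

theorem coarseRel_isAdmissible : IsAdmissible (coarseRel α) := by
  refine ⟨fun h => ⟨fun _ _ _ _ => rfl, fun hn x y hxy => (hn x y hxy).symm,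
      fun hn hn' x y hxy => (hn x y hxy).trans (hn' x y hxy)⟩, ?_, ?_, ?_⟩
  · intro n n' hn
    rw [← one_apply hr hα n, ← one_apply hr hα n', hn 1 1 (by simp)]
  · intro h n n' m hn x y hxy
    have hx : x * (h * y) = 1 := by rwa [← mul_assoc]
    rw [map_mul_of_mul_eq_one hr hα hx, map_mul_of_mul_eq_one hr hα hx, hn x y hxy]
  · intro h n n' y hn x z hxz
    exact hn x (y * z) (by simpa only [mul_assoc] using hxz)

theorem coarseRel_isCompatibleAction : IsCompatibleAction (coarseRel α) α := by
  refine ⟨?_, ?_, ?_, ?_, ?_, ?_⟩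
  · intro h n n' m hn x y hxy
    have hx : x * (h * y) = 1 := by rwa [← mul_assoc]
    rw [map_mul_of_mul_eq_one hr hα hx, map_mul_of_mul_eq_one hr hα hx, hn x y hxy]
  · intro h n n' g hn x y hxy
    have hxg : x * g * (h * y) = 1 := by simpa only [mul_assoc] using hxy
    rw [← map_mul_apply_of_mul_eq_one hr hα hxg, ← map_mul_apply_of_mul_eq_one hr hα hxg]
    exact hn (x * g) y (by simpa only [mul_assoc] using hxy)
  · intro h n n' x y hxy
    have hx : x * (h * y) = 1 := by rwa [← mul_assoc]
    rw [← map_mul_apply_of_mul_eq_one hr hα hxy, map_mul_of_mul_eq_one hr hα hxy,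
      map_mul_of_mul_eq_one hr hα hx, map_mul_apply_of_mul_eq_one hr hα hxy,
      map_mul_apply_of_mul_eq_one hr hα hxy]
  · intro h h' n x y hxy
    have hxh : x * h * (h' * y) = 1 := by simpa only [mul_assoc] using hxy
    have hxhh' : x * h * h' * y = 1 := by simpa only [mul_assoc] using hxy
    rw [← map_mul_apply_of_mul_eq_one hr hα hxy, ← map_mul_apply_of_mul_eq_one hr hα hxh,
      ← map_mul_apply_of_mul_eq_one hr hα hxhh', mul_assoc]
  · intro h x y hxy
    have hx : x * (h * y) = 1 := by rwa [← mul_assoc]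
    rw [← map_mul_apply_of_mul_eq_one hr hα hxy, map_one_of_mul_eq_one hr hα hxy,
      map_one_of_mul_eq_one hr hα hx]
  · intro n x _ _
    rw [one_apply hr hα]

end IsCompatibleAction

theorem exists_completeLattice_compatible {α : H → N → N}
    (hE : IsAdmissible (coarseRel α)) (hEα : IsCompatibleAction (coarseRel α) α) :
    ∃ inst : CompleteLattice {r : H → N → N → Prop // IsAdmissible r ∧ IsCompatibleAction r α},
      ∀ a b : {r : H → N → N → Prop // IsAdmissible r ∧ IsCompatibleAction r α},
        inst.le a b ↔ ∀ (h : H) (n n' : N), a.1 h n n' → b.1 h n n' := by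
  -- `none` contributes `E_α`, so the meet of `∅` is `E_α`, not the inadmissible total relation.
  let family (S : Set {r // IsAdmissible r ∧ IsCompatibleAction r α}) :
      Option S → H → N → N → Prop :=
    fun i => i.elim (coarseRel α) (fun s => s.1.1)
  have hadm S : ∀ i, IsAdmissible (family S i) := fun i => i.rec hE fun s => s.1.2.1
  have hcomp S : ∀ i, IsCompatibleAction (family S i) α := fun i => i.rec hEα fun s => s.1.2.2
  let _ : InfSet {r // IsAdmissible r ∧ IsCompatibleAction r α} :=
    ⟨fun S => ⟨fun h n n' => ∀ i, family S i h n n',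
      IsAdmissible.iInf (hadm S), IsCompatibleAction.iInf (hcomp S)⟩⟩
  refine ⟨completeLatticeOfInf _ fun S => ⟨fun s hs h n n' hn => hn (some ⟨s, hs⟩), ?_⟩,
    fun _ _ => Iff.rfl⟩
  rintro b hb h n n' hn (_ | s)
  · exact b.2.2.le_coarseRel b.2.1 hn
  · exact hb s.2 h n n' hn

end

/-- If α is compatible with some admissible H-indexed equivalence relation E,
then α is compatible with the coarse equivalence relation
E_α : n ∼_α^h n' iff ∀ x y, x·h·y = 1 → α(x,n) = α(x,n'); moreover E_α is admissible and is
the largest admissible equivalence relation compatible with α. Consequently the admissible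
equivalence relations compatible with the (valid) map α form a complete lattice under
inclusion. -/
theorem coarse_compatible_and_complete_lattice {H N : Type*} [Monoid H] [Monoid N]
    (α : H → N → N) (e : H → N → N → Prop)
    (hadm : IsAdmissible e) (hcomp : IsCompatibleAction e α) :
    IsAdmissible (fun (h : H) (n n' : N) => ∀ x y : H, x * h * y = 1 → α x n = α x n') ∧
    IsCompatibleAction (fun (h : H) (n n' : N) => ∀ x y : H, x * h * y = 1 → α x n = α x n') α ∧
    -- E_α is the largest admissible equivalence relation compatible with α
    (∀ e' : H → N → N → Prop, IsAdmissible e' → IsCompatibleAction e' α →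
      ∀ (h : H) (n n' : N), e' h n n' → ∀ x y : H, x * h * y = 1 → α x n = α x n') ∧
    -- the compatible admissible equivalence relations form a complete lattice under inclusion
    ∃ inst : CompleteLattice {r : H → N → N → Prop // IsAdmissible r ∧ IsCompatibleAction r α},
      ∀ a b : {r : H → N → N → Prop // IsAdmissible r ∧ IsCompatibleAction r α},
        inst.le a b ↔ ∀ (h : H) (n n' : N), a.1 h n n' → b.1 h n n' := by
  have hE : IsAdmissible (coarseRel α) := hcomp.coarseRel_isAdmissible hadm
  have hEα : IsCompatibleAction (coarseRel α) α := hcomp.coarseRel_isCompatibleAction hadm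
  exact ⟨hE, hEα, fun e' hadm' hcomp' _ _ _ hn => hcomp'.le_coarseRel hadm' hn,
    exists_completeLattice_compatible hE hEα⟩
end

section
/- Let H be the bicyclic monoid B = ⟨p, q | pq = 1⟩. Then x·(q^a p^b)·y = 1 in B if and only if x = p^{a+i} and y = q^{b+i} for some i ≥ 0. Consequently, for the action α of B on Z^ω given by right-shift-with-zero for q and left-shift for p, the coarse equivalence relation satisfies s ∼_α^{q^a p^b} s' if and only if s_n = s'_n for all n ≥ a. -/
/-- The bicyclic monoid B = ⟨p, q | pq = 1⟩ in normal form: the pair (a, b) represents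
q^a p^b, with multiplication
q^a p^b · q^{a'} p^{b'} = q^{a+a'-min(b,a')} p^{b+b'-min(b,a')} and unit (0,0). -/
def bmul (x y : ℕ × ℕ) : ℕ × ℕ :=
  (x.1 + y.1 - min x.2 y.1, x.2 + y.2 - min x.2 y.1)

/-- The element q^a p^b. -/
def qp (a b : ℕ) : ℕ × ℕ := (a, b)

/-- The action of the bicyclic monoid on ℤ^ω determined by α(q,s)_n = s_{n-1} for n > 0 and
0 for n = 0, and α(p,s)_n = s_{n+1}; on the normal form q^a p^b it is
α(q^a p^b, s)_n = s_{n-a+b} for n ≥ a and 0 otherwise. -/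
def bact (w : ℕ × ℕ) (s : ℕ → ℤ) : ℕ → ℤ :=
  fun n => if w.1 ≤ n then s (n - w.1 + w.2) else 0

/-! A product x·h·y can only be 1 if x is a pure power of p and y a pure power of q, since no
factor to their left (right) can cancel the q's of x (the p's of y); the p's of x must then
absorb the q^a of h = q^a p^b, and the q's of y its p^b. The elements acting in the coarse
relation of q^a p^b are thus the p^{a+i}, and p^c acts as the shift by c, so the relation asks
exactly that s and s' agree from index a on. -/

lemma bmul_bmul_qp_eq_one_iff (x y : ℕ × ℕ) (a b : ℕ) :
    bmul (bmul x (qp a b)) y = (0, 0) ↔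
      ∃ i : ℕ, x = qp 0 (a + i) ∧ y = qp (b + i) 0 := by
  obtain ⟨x1, x2⟩ := x
  obtain ⟨y1, y2⟩ := y
  simp only [bmul, qp, Prod.ext_iff]
  constructor
  · rintro ⟨h1, h2⟩
    exact ⟨x2 - a, by omega, by omega, by omega⟩
  · rintro ⟨i, ⟨rfl, rfl⟩, rfl, rfl⟩
    omega

lemma bact_qp_zero (c : ℕ) (s : ℕ → ℤ) : bact (qp 0 c) s = fun n => s (n + c) := by
  funext n
  simp [bact, qp]

/-- In the bicyclic monoid B = ⟨p, q | pq = 1⟩ one has x·(q^a p^b)·y = 1 iff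
x = p^{a+i} and y = q^{b+i} for some i ≥ 0.  Consequently, for the shift action α of B on
ℤ^ω, the coarse equivalence relation (s ∼_α^h s' iff α(x,s) = α(x,s') whenever x·h·y = 1)
satisfies s ∼_α^{q^a p^b} s' iff s_n = s'_n for all n ≥ a. -/
theorem bicyclic_coarse_equivalence :
    (∀ (x y : ℕ × ℕ) (a b : ℕ),
      bmul (bmul x (qp a b)) y = (0, 0) ↔
        ∃ i : ℕ, x = qp 0 (a + i) ∧ y = qp (b + i) 0) ∧
    ∀ (a b : ℕ) (s s' : ℕ → ℤ),
      (∀ x y : ℕ × ℕ, bmul (bmul x (qp a b)) y = (0, 0) → bact x s = bact x s') ↔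
        ∀ n : ℕ, a ≤ n → s n = s' n := by
  refine ⟨bmul_bmul_qp_eq_one_iff, fun a b s s' => ⟨fun h n hn => ?_, fun h x y hxy => ?_⟩⟩
  · have hshift := h (qp 0 a) (qp b 0) ((bmul_bmul_qp_eq_one_iff _ _ a b).2 ⟨0, rfl, rfl⟩)
    rw [bact_qp_zero, bact_qp_zero] at hshift
    simpa [Nat.sub_add_cancel hn] using congrFun hshift (n - a)
  · obtain ⟨i, rfl, -⟩ := (bmul_bmul_qp_eq_one_iff x y a b).1 hxy
    rw [bact_qp_zero, bact_qp_zero]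
    exact funext fun n => h _ (by omega)
end
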